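/- For odd n, conjugation by U = I ⊗ (I - i Y^{⊗(n-1)})/√2 establishes a bijection between the defining symplectic algebra sp(2^n) = { B : J† Bᵀ J = -B, B† = -B } with J = Y ⊗ I^{⊗(n-1)}, and the set { A : Y^{⊗n} Aᵀ Y^{⊗n} = -A, A† = -A }. -/
import Mathlib


open Matrix Complex

noncomputable def pauli : Fin 4 → Matrix (Fin 2) (Fin 2) ℂ
  | 0 => 1
  | 1 => !![0, 1; 1, 0]
  | 2 => !![0, -I; I, 0]
  | 3 => !![1, 0; 0, -1]

/-- Tensor product of Pauli matrices indexed by `a : Fin n → Fin 4`. -/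
noncomputable def PauliProd {n : ℕ} (a : Fin n → Fin 4) :
    Matrix (Fin n → Fin 2) (Fin n → Fin 2) ℂ :=
  Matrix.of fun i j => ∏ k, pauli (a k) (i k) (j k)

/-- Weight: the number of non-identity tensor factors. -/
noncomputable def wt {n : ℕ} (a : Fin n → Fin 4) : ℕ :=
  (Finset.univ.filter fun i => a i ≠ 0).card

/-- Support: the set of qubits on which the Pauli product acts nontrivially. -/
noncomputable def supp {n : ℕ} (a : Fin n → Fin 4) : Finset (Fin n) :=
  Finset.univ.filter fun i => a i ≠ 0

/- ------------------- auxiliary lemmas ------------------- -/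

lemma pauli_zero : pauli 0 = 1 := rfl

lemma pauli_two_sq : pauli 2 * pauli 2 = pauli 0 := by
  simp only [pauli]
  norm_num [Matrix.mul_fin_two, Complex.I_mul_I]
  exact Matrix.one_fin_two.symm

lemma pauli_star (m : Fin 4) (i j : Fin 2) :
    star (pauli m j i) = pauli m i j := by
  fin_cases m <;> fin_cases i <;> fin_cases j <;>
    simp [pauli, Matrix.one_apply]

/-- transpose sign of a Pauli matrix -/
noncomputable def tsign (m : Fin 4) : ℂ := if m = 2 then -1 else 1

lemma pauli_transpose (m : Fin 4) (i j : Fin 2) :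
    pauli m j i = tsign m * pauli m i j := by
  fin_cases m <;> fin_cases i <;> fin_cases j <;>
    simp [pauli, tsign, Matrix.one_apply]

lemma PauliProd_conjTranspose {n : ℕ} (a : Fin n → Fin 4) :
    (PauliProd a)ᴴ = PauliProd a := by
  ext i j
  simp only [Matrix.conjTranspose_apply, PauliProd, Matrix.of_apply]
  rw [star_prod]
  exact Finset.prod_congr rfl fun k _ => pauli_star _ _ _

lemma PauliProd_transpose {n : ℕ} (a : Fin n → Fin 4) :
    (PauliProd a)ᵀ = (∏ k, tsign (a k)) • PauliProd a := by
  ext i j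
  simp only [Matrix.transpose_apply, PauliProd, Matrix.of_apply, Matrix.smul_apply,
    smul_eq_mul, ← Finset.prod_mul_distrib]
  exact Finset.prod_congr rfl fun k _ => pauli_transpose _ _ _

lemma PauliProd_zero {n : ℕ} : PauliProd (fun _ : Fin n => (0 : Fin 4)) = 1 := by
  ext i j
  simp only [PauliProd, Matrix.of_apply, pauli, Matrix.one_apply]
  by_cases h : i = j
  · subst h; simp
  · rw [if_neg h]
    obtain ⟨k, hk⟩ : ∃ k, i k ≠ j k := by
      by_contra hc; push_neg at hc; exact h (funext hc)
    exact Finset.prod_eq_zero (Finset.mem_univ k) (by rw [if_neg hk])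

lemma PauliProd_mul {n : ℕ} (a b c : Fin n → Fin 4)
    (h : ∀ k, pauli (a k) * pauli (b k) = pauli (c k)) :
    PauliProd a * PauliProd b = PauliProd c := by
  ext i j
  simp only [Matrix.mul_apply, PauliProd, Matrix.of_apply, ← Finset.prod_mul_distrib]
  rw [← Fintype.prod_sum (fun k (t : Fin 2) => pauli (a k) (i k) t * pauli (b k) t (j k))]
  exact Finset.prod_congr rfl fun k _ => by
    rw [← Matrix.mul_apply, h k]

lemma tsign_K {n : ℕ} (hn : Odd n) :
    ∏ k : Fin n, tsign ((fun i : Fin n => if (i:ℕ) = 0 then (0 : Fin 4) else 2) k) = 1 := by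
  have hpos : 0 < n := hn.pos
  have h1 : ∀ k : Fin n, tsign (if (k:ℕ) = 0 then (0 : Fin 4) else 2)
      = (-1) * (if k = (⟨0, hpos⟩ : Fin n) then (-1:ℂ) else 1) := by
    intro k
    have : ((k:ℕ) = 0) = (k = (⟨0, hpos⟩ : Fin n)) := by
      rw [Fin.ext_iff]
    by_cases h : (k:ℕ) = 0 <;> simp [tsign, h, ← this]
  rw [Finset.prod_congr rfl fun k _ => h1 k, Finset.prod_mul_distrib,
    Finset.prod_const, Finset.prod_ite_eq']
  simp [hn.neg_one_pow]

section Abstract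
variable {m : Type*} [Fintype m] [DecidableEq m]

lemma sandwich_cancel (V W : Matrix m m ℂ) (hWV : W * V = (2:ℂ) • 1)
    {X Y : Matrix m m ℂ} (h : V * X * W = V * Y * W) : X = Y := by
  have e : ∀ Z : Matrix m m ℂ, W * (V * Z * W) * V = (4:ℂ) • Z := by
    intro Z
    calc W * (V * Z * W) * V = (W * V) * Z * (W * V) := by
          simp only [mul_assoc]
      _ = ((2:ℂ) • 1) * Z * ((2:ℂ) • 1) := by rw [hWV]
      _ = (4:ℂ) • Z := by
          simp only [Matrix.smul_mul, Matrix.mul_smul, one_mul, mul_one, smul_smul]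
          norm_num
  have h2 := congrArg (fun Z => W * Z * V) h
  simp only [e] at h2
  exact smul_right_injective _ (by norm_num : (4:ℂ) ≠ 0) h2

lemma main_abstract (J K P B : Matrix m m ℂ) (c : ℂ) (hc : c ≠ 0) (hcs : star c = c)
    (hJH : Jᴴ = J) (hKH : Kᴴ = K)
    (hKt : Kᵀ = K)
    (hJK : J * K = P) (hKJ : K * J = P) (hKK : K * K = 1)
    (hPK : P * K = J) (hKP : K * P = J) :
    (Jᴴ * Bᵀ * J = -B ∧ Bᴴ = -B) ↔
    (P * ((c • (1 - Complex.I • K)) * B * (c • (1 - Complex.I • K))ᴴ)ᵀ * P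
       = -((c • (1 - Complex.I • K)) * B * (c • (1 - Complex.I • K))ᴴ) ∧
     ((c • (1 - Complex.I • K)) * B * (c • (1 - Complex.I • K))ᴴ)ᴴ
       = -((c • (1 - Complex.I • K)) * B * (c • (1 - Complex.I • K))ᴴ)) := by
  set V : Matrix m m ℂ := 1 - Complex.I • K with hV
  set W : Matrix m m ℂ := 1 + Complex.I • K with hW
  have hVH : Vᴴ = W := by
    simp [hV, hW, conjTranspose_sub, conjTranspose_smul, hKH, Complex.star_def,
      Complex.conj_I, sub_neg_eq_add]
  have hWH : Wᴴ = V := by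
    simp [hV, hW, conjTranspose_add, conjTranspose_smul, hKH, Complex.star_def,
      Complex.conj_I, sub_eq_add_neg]
  have hVt : Vᵀ = V := by simp [hV, transpose_sub, transpose_smul, hKt]
  have hWt : Wᵀ = W := by simp [hW, transpose_add, transpose_smul, hKt]
  have hVW : V * W = (2:ℂ) • 1 := by
    simp only [hV, hW, sub_mul, mul_add, one_mul, mul_one, Matrix.smul_mul,
      Matrix.mul_smul, hKK, smul_smul, Complex.I_mul_I]
    match_scalars <;> norm_num [Complex.I_sq]
  have hWV : W * V = (2:ℂ) • 1 := by
    simp only [hV, hW, add_mul, mul_sub, one_mul, mul_one, Matrix.smul_mul,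
      Matrix.mul_smul, hKK, smul_smul, Complex.I_mul_I]
    match_scalars <;> norm_num [Complex.I_sq]
  have hWJ : W * J = J * W := by
    simp only [hW, add_mul, mul_add, one_mul, mul_one, Matrix.smul_mul,
      Matrix.mul_smul, hKJ, hJK]
  have hPW : P * W = Complex.I • (V * J) := by
    simp only [hW, hV, mul_add, mul_one, Matrix.mul_smul, hPK, sub_mul, one_mul,
      Matrix.smul_mul, smul_smul, hKJ, Complex.I_mul_I]
    match_scalars <;> norm_num [Complex.I_sq]
  have hVP : V * P = (-Complex.I) • (W * J) := by
    simp only [hV, hW, sub_mul, one_mul, Matrix.smul_mul, hKP, add_mul,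
      Matrix.mul_smul, smul_smul, hKJ, Complex.I_mul_I]
    match_scalars <;> norm_num [Complex.I_sq]
  have hKey : ∀ X : Matrix m m ℂ, P * (V * X * W)ᵀ * P = V * (J * Xᵀ * J) * W := by
    intro X
    have h1 : (V * X * W)ᵀ = W * Xᵀ * V := by
      rw [transpose_mul, transpose_mul, hWt, hVt, mul_assoc]
    calc P * (V * X * W)ᵀ * P = (P * W) * Xᵀ * (V * P) := by
          rw [h1]; simp only [mul_assoc]
      _ = (Complex.I • (V * J)) * Xᵀ * ((-Complex.I) • (W * J)) := by rw [hPW, hVP]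
      _ = (-Complex.I * Complex.I) • (V * (J * (Xᵀ * (W * J)))) := by
          simp only [Matrix.smul_mul, Matrix.mul_smul, smul_smul, mul_assoc]
      _ = V * J * Xᵀ * (J * W) := by
          rw [hWJ]
          simp [neg_mul, Complex.I_mul_I, mul_assoc]
      _ = V * (J * Xᵀ * J) * W := by simp only [mul_assoc]
  have hUH : (c • V)ᴴ = c • W := by rw [conjTranspose_smul, hVH, hcs]
  have hA : (c • V) * B * (c • V)ᴴ = (c * c) • (V * B * W) := by
    rw [hUH]
    simp only [Matrix.smul_mul, Matrix.mul_smul, smul_smul]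
  have hc2 : (c * c : ℂ) ≠ 0 := mul_ne_zero hc hc
  have hcs2 : star (c * c) = c * c := by rw [star_mul', hcs]
  have hneg : ∀ X : Matrix m m ℂ, V * (-X) * W = -(V * X * W) := by
    intro X; simp
  constructor
  · rintro ⟨h1, h2⟩
    rw [hJH] at h1
    constructor
    · rw [hA, transpose_smul, Matrix.mul_smul, Matrix.smul_mul, hKey, h1, hneg, smul_neg]
    · rw [hA, conjTranspose_smul, hcs2]
      have : (V * B * W)ᴴ = V * Bᴴ * W := by
        rw [conjTranspose_mul, conjTranspose_mul, hWH, hVH, mul_assoc]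
      rw [this, h2, hneg, smul_neg]
  · rintro ⟨h1, h2⟩
    rw [hA, transpose_smul, Matrix.mul_smul, Matrix.smul_mul, hKey, ← smul_neg,
      ← hneg] at h1
    have e1 := sandwich_cancel V W hWV (smul_right_injective _ hc2 h1)
    rw [hA, conjTranspose_smul, hcs2] at h2
    have : (V * B * W)ᴴ = V * Bᴴ * W := by
      rw [conjTranspose_mul, conjTranspose_mul, hWH, hVH, mul_assoc]
    rw [this, ← smul_neg, ← hneg] at h2
    have e2 := sandwich_cancel V W hWV (smul_right_injective _ hc2 h2)
    exact ⟨by rw [hJH, e1], e2⟩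

end Abstract

/-- For odd n, conjugation by U = I ⊗ (I - i Y^{⊗(n-1)})/√2 carries the defining
representation of sp(2^n) (with J = Y ⊗ I^{⊗(n-1)}) onto
{ A : Y^{⊗n} Aᵀ Y^{⊗n} = -A, A† = -A }. -/
theorem sp_iso_odd_pauli {n : ℕ} (hn : Odd n)
    (B : Matrix (Fin n → Fin 2) (Fin n → Fin 2) ℂ) :
    ((PauliProd (fun i : Fin n => if (i : ℕ) = 0 then (2 : Fin 4) else 0))ᴴ * Bᵀ *
        PauliProd (fun i : Fin n => if (i : ℕ) = 0 then (2 : Fin 4) else 0) = -B ∧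
      Bᴴ = -B) ↔
      (PauliProd (fun _ => 2) *
          (((Real.sqrt 2 : ℂ)⁻¹ •
              (1 - Complex.I • PauliProd (fun i : Fin n => if (i : ℕ) = 0 then (0 : Fin 4) else 2))) * B *
            ((Real.sqrt 2 : ℂ)⁻¹ •
              (1 - Complex.I • PauliProd (fun i : Fin n => if (i : ℕ) = 0 then (0 : Fin 4) else 2)))ᴴ)ᵀ *
          PauliProd (fun _ => 2)
        = -(((Real.sqrt 2 : ℂ)⁻¹ •
              (1 - Complex.I • PauliProd (fun i : Fin n => if (i : ℕ) = 0 then (0 : Fin 4) else 2))) * B *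
            ((Real.sqrt 2 : ℂ)⁻¹ •
              (1 - Complex.I • PauliProd (fun i : Fin n => if (i : ℕ) = 0 then (0 : Fin 4) else 2)))ᴴ) ∧
      (((Real.sqrt 2 : ℂ)⁻¹ •
              (1 - Complex.I • PauliProd (fun i : Fin n => if (i : ℕ) = 0 then (0 : Fin 4) else 2))) * B *
            ((Real.sqrt 2 : ℂ)⁻¹ •
              (1 - Complex.I • PauliProd (fun i : Fin n => if (i : ℕ) = 0 then (0 : Fin 4) else 2)))ᴴ)ᴴ
        = -(((Real.sqrt 2 : ℂ)⁻¹ •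
              (1 - Complex.I • PauliProd (fun i : Fin n => if (i : ℕ) = 0 then (0 : Fin 4) else 2))) * B *
            ((Real.sqrt 2 : ℂ)⁻¹ •
              (1 - Complex.I • PauliProd (fun i : Fin n => if (i : ℕ) = 0 then (0 : Fin 4) else 2)))ᴴ)) := by
  have hsqrt : ((Real.sqrt 2 : ℝ) : ℂ) ≠ 0 :=
    Complex.ofReal_ne_zero.mpr (ne_of_gt (Real.sqrt_pos.mpr two_pos))
  refine main_abstract
    (PauliProd (fun i : Fin n => if (i : ℕ) = 0 then (2 : Fin 4) else 0))
    (PauliProd (fun i : Fin n => if (i : ℕ) = 0 then (0 : Fin 4) else 2))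
    (PauliProd (fun _ : Fin n => (2 : Fin 4))) B _
    (inv_ne_zero hsqrt)
    (by simp [Complex.star_def, map_inv₀, Complex.conj_ofReal])
    (PauliProd_conjTranspose _) (PauliProd_conjTranspose _)
    (by rw [PauliProd_transpose, tsign_K hn, one_smul])
    (PauliProd_mul _ _ _ fun k => by
      by_cases h : (k : ℕ) = 0 <;> simp [h, pauli_zero])
    (PauliProd_mul _ _ _ fun k => by
      by_cases h : (k : ℕ) = 0 <;> simp [h, pauli_zero])
    ((PauliProd_mul _ _ (fun _ => 0) fun k => by
      by_cases h : (k : ℕ) = 0 <;> simp [h, pauli_zero, pauli_two_sq]).trans PauliProd_zero)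
    (PauliProd_mul _ _ _ fun k => by
      by_cases h : (k : ℕ) = 0 <;> simp [h, pauli_zero, pauli_two_sq])
    (PauliProd_mul _ _ _ fun k => by
      by_cases h : (k : ℕ) = 0 <;> simp [h, pauli_zero, pauli_two_sq])
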